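/- In an extended partition hierarchy of height h in which every zone record has at most two partition records (so each zone record has a fingerprint, namely the sequence of status flags from {operable, in-progress} along its ancestor chain of zone records), the following holds: if a tree node v occurs in two distinct zone records R ≠ R' at the same level in the extended partition hierarchy, then the fingerprints of R and R' are different; consequently, each tree node occurs in at most 2^h zone records of the extended hierarchy. -/

import Mathlib

/-- Status flags of partition records. -/
inductive Status : Type where
  | operable
  | inProgress
deriving DecidableEq

/-- Extended partition hierarchies: a zone record holds a zone and a list of child
zone records, each tagged with the status of the (at most two, one per status)
partition record it belongs to. -/
inductive ERec : Type where
  | base : Set (List ℕ) → ERec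
  | step : Set (List ℕ) → List (Status × ERec) → ERec

namespace ERec

def zoneOf : ERec → Set (List ℕ)
  | .base S => S
  | .step S _ => S

/-- Validity of an extended partition hierarchy of height `ℓ`: the zones of child
records are contained in the parent zone, and for each status the child records
with that status (i.e., the records of one partition record) have pairwise
disjoint zones; there are at most two partition records since there are exactly
two statuses. -/
inductive EValid : ℕ → ERec → Prop where
  | base : ∀ S, EValid 1 (ERec.base S)
  | step : ∀ (ℓ : ℕ) (S : Set (List ℕ)) (children : List (Status × ERec)),
      (∀ c ∈ children, zoneOf c.2 ⊆ S) →
      (∀ st : Status,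
        ((children.filter (fun c => decide (c.1 = st))).map (fun c => zoneOf c.2)).Pairwise
          (fun A B => Disjoint A B)) →
      (∀ c ∈ children, EValid ℓ c.2) →
      EValid (ℓ + 1) (ERec.step S children)

open Classical in
/-- The list of fingerprints (status sequences along the ancestor chain) of all
zone records of the extended hierarchy that contain the node `v`.  The length of a
fingerprint determines the level of the corresponding record. -/
noncomputable def fprints (v : List ℕ) : ERec → List (List Status)
  | .base S => if v ∈ S then [[]] else []
  | .step S children =>
      (if v ∈ S then [[]] else []) ++
      (children.attach.map (fun c => (fprints v c.1.2).map (fun fp => c.1.1 :: fp))).flatten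
  decreasing_by
    have h1 := List.sizeOf_lt_of_mem c.2
    obtain ⟨⟨st, r⟩, hmem⟩ := c
    simp_wf
    simp only [Prod.mk.sizeOf_spec] at h1
    omega

end ERec

/-! Along the path to a zone record containing `v`, each status picks out a unique child containing
`v`, because the zone records of one partition record are disjoint. So the fingerprint determines
the record, and in a hierarchy of height `h` it is a status list of length `< h`; there are
`2 ^ h - 1` of those. -/

namespace Status

def listsLengthLT : ℕ → List (List Status)
  | 0 => []
  | n + 1 => [] :: ((listsLengthLT n).map (operable :: ·) ++ (listsLengthLT n).map (inProgress :: ·))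

theorem mem_listsLengthLT {n : ℕ} {l : List Status} : l ∈ listsLengthLT n ↔ l.length < n := by
  induction n generalizing l with
  | zero => simp [listsLengthLT]
  | succ n ih =>
    rcases l with _ | ⟨s, l⟩
    · simp [listsLengthLT]
    · cases s <;> simp [listsLengthLT, ih]

theorem length_listsLengthLT (n : ℕ) : (listsLengthLT n).length = 2 ^ n - 1 := by
  induction n with
  | zero => rfl
  | succ n ih =>
    have : 1 ≤ 2 ^ n := Nat.one_le_two_pow
    simp only [listsLengthLT, List.length_cons, List.length_append, List.length_map, ih, pow_succ]
    omega

end Status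

theorem List.pairwise_of_forall_pairwise_filter {α κ : Type*} [DecidableEq κ] {key : α → κ}
    {R : α → α → Prop} {l : List α}
    (h : ∀ k, (l.filter fun a => decide (key a = k)).Pairwise R) :
    l.Pairwise fun a b => key a = key b → R a b := by
  rw [List.pairwise_iff_forall_sublist]
  intro a b hab hkey
  exact List.pairwise_iff_forall_sublist.1 (h (key a))
    (List.sublist_filter_iff.2 ⟨[a, b], hab, by simp [hkey]⟩)

namespace ERec

open Classical in
theorem fprints_step (v : List ℕ) (S : Set (List ℕ)) (children : List (Status × ERec)) :
    fprints v (.step S children) = (if v ∈ S then [[]] else []) ++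
      (children.map fun c => (fprints v c.2).map (c.1 :: ·)).flatten := by
  rw [fprints, List.attach_map_val (f := fun c : Status × ERec => (fprints v c.2).map (c.1 :: ·))]

variable {v : List ℕ}

theorem mem_fprints_base {S : Set (List ℕ)} {fp : List Status} :
    fp ∈ fprints v (.base S) ↔ v ∈ S ∧ fp = [] := by
  by_cases hv : v ∈ S <;> simp [fprints, hv]

theorem mem_fprints_step {S : Set (List ℕ)} {children : List (Status × ERec)} {fp : List Status} :
    fp ∈ fprints v (.step S children) ↔
      (v ∈ S ∧ fp = []) ∨ ∃ c ∈ children, ∃ fp' ∈ fprints v c.2, c.1 :: fp' = fp := by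
  by_cases hv : v ∈ S <;> simp [fprints_step, hv]

variable {ℓ : ℕ} {r : ERec} {fp : List Status}

theorem EValid.mem_zoneOf_of_mem_fprints (hr : EValid ℓ r) (hfp : fp ∈ fprints v r) :
    v ∈ zoneOf r := by
  induction hr generalizing fp with
  | base S => exact (mem_fprints_base.1 hfp).1
  | step ℓ S children hsub _ _ ih =>
    rcases mem_fprints_step.1 hfp with ⟨hv, -⟩ | ⟨c, hc, fp', hfp', -⟩
    · exact hv
    · exact hsub c hc (ih c hc hfp')

theorem EValid.length_lt_of_mem_fprints (hr : EValid ℓ r) (hfp : fp ∈ fprints v r) :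
    fp.length < ℓ := by
  induction hr generalizing fp with
  | base S => simp [(mem_fprints_base.1 hfp).2]
  | step ℓ S children _ _ _ ih =>
    rcases mem_fprints_step.1 hfp with ⟨-, rfl⟩ | ⟨c, hc, fp', hfp', rfl⟩
    · simp
    · simpa using ih c hc hfp'

theorem EValid.nodup_fprints (hr : EValid ℓ r) : (fprints v r).Nodup := by
  induction hr with
  | base S => by_cases hv : v ∈ S <;> simp [fprints, hv]
  | step ℓ S children _ hdisj hvalid ih =>
    have hsame : children.Pairwise fun c c' => c.1 = c'.1 → Disjoint (zoneOf c.2) (zoneOf c'.2) :=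
      List.pairwise_of_forall_pairwise_filter fun st => List.pairwise_map.1 (hdisj st)
    have hflat : (children.map fun c => (fprints v c.2).map (c.1 :: ·)).flatten.Nodup := by
      refine List.nodup_flatten.2 ⟨?_, List.pairwise_map.2 (hsame.imp_of_mem ?_)⟩
      · simp only [List.mem_map]
        rintro _ ⟨c, hc, rfl⟩
        exact (ih c hc).map List.cons_injective
      · rintro c c' hc hc' hzones fp hfp hfp'
        simp only [List.mem_map] at hfp hfp'
        obtain ⟨fp₁, h₁, rfl⟩ := hfp
        obtain ⟨fp₂, h₂, heq⟩ := hfp'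
        exact Set.disjoint_left.1 (hzones (List.cons.inj heq).1.symm)
          ((hvalid c hc).mem_zoneOf_of_mem_fprints h₁)
          ((hvalid c' hc').mem_zoneOf_of_mem_fprints h₂)
    rw [fprints_step]
    by_cases hv : v ∈ S <;> simpa [hv] using hflat

end ERec

open ERec in
/-- in a valid extended partition hierarchy of height `h`, any two
distinct zone records containing the same tree node `v` have distinct fingerprints
(the fingerprint list of `v` has no duplicates); consequently, `v` occurs in at
most `2^h` zone records of the extended hierarchy. -/
theorem fingerprints_distinct (h : ℕ) (H : ERec) (hvalid : EValid h H)
    (v : List ℕ) :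
    (fprints v H).Nodup ∧ (fprints v H).length ≤ 2 ^ h := by
  have hnodup := hvalid.nodup_fprints (v := v)
  have hshort : fprints v H ⊆ Status.listsLengthLT h := fun _ hfp =>
    Status.mem_listsLengthLT.2 (hvalid.length_lt_of_mem_fprints hfp)
  refine ⟨hnodup, ?_⟩
  calc (fprints v H).length ≤ (Status.listsLengthLT h).length :=
        (List.subperm_of_subset hnodup hshort).length_le
    _ = 2 ^ h - 1 := Status.length_listsLengthLT h
    _ ≤ 2 ^ h := Nat.sub_le _ _
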